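/- arXiv:2403.02815 — 6 statements merged into one kernel-verified Lean document; each statement's English description precedes it below -/
import Mathlib

section
/- Let R be a semiprime ring and b ∈ R a fixed element. If b·a·b·a·b = 0 for all a ∈ R, then b = 0. -/
/-- Lemma 1(1): in a semiprime ring, if `b*a*b*a*b = 0` for all `a`, then `b = 0`. -/
theorem stmt_0 {R : Type*} [Ring R]
    (hsemiprime : ∀ x : R, (∀ a : R, x * a * x = 0) → x = 0)
    (b : R) (h : ∀ a : R, b * a * b * a * b = 0) : b = 0 := by
  have key : ∀ u v : R, b * u * b * v * b + b * v * b * u * b = 0 := by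
    intro u v
    have huv := h (u + v)
    have hu := h u
    have hv := h v
    have expand : b * (u + v) * b * (u + v) * b
        = b * u * b * u * b + (b * u * b * v * b + b * v * b * u * b)
          + b * v * b * v * b := by noncomm_ring
    rw [expand, hu, hv] at huv
    simpa using huv
  have hbab : ∀ a : R, b * a * b = 0 := by
    intro a
    apply hsemiprime
    intro r
    have k := key (a * b * r) a
    have h2 : b * a * b * (a * b * r) * b = 0 := by
      have : b * a * b * (a * b * r) * b = b * a * b * a * b * (r * b) := by
        noncomm_ring
      rw [this, h a, zero_mul]
    rw [h2, add_zero] at k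
    calc b * a * b * r * (b * a * b) = b * (a * b * r) * b * a * b := by noncomm_ring
      _ = 0 := k
  exact hsemiprime b hbab
end

section
/- Let R be a 2-torsion free semiprime ring, and let α, β be ring automorphisms of R. Then every Jordan (α,β)-derivation of R is an (α,β)-derivation. -/
namespace JordanAB

variable {R : Type*} [Ring R]

/-- The obstruction to being a (1,σ)-derivation. -/
def Gd (σ : R → R) (δ : R →+ R) (p q : R) : R := δ (p*q) - p * δ q - δ p * σ q

section basic
variable {σ : R → R} {δ : R →+ R}
variable (σadd : ∀ x y : R, σ (x + y) = σ x + σ y)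
variable (σmul : ∀ x y : R, σ (x * y) = σ x * σ y)
variable (tor : ∀ x : R, x + x = 0 → x = 0)
variable (hJ : ∀ a : R, δ (a*a) = a * δ a + δ a * σ a)

include σadd hJ in
lemma hF1 (x y : R) : δ (x*y) + δ (y*x) = x * δ y + δ x * σ y + y * δ x + δ y * σ x := by
  have h := hJ (x+y)
  have e : (x+y)*(x+y) = x*x + (x*y + y*x) + y*y := by noncomm_ring
  rw [e, map_add, map_add, map_add, hJ x, hJ y, map_add, σadd] at h
  linear_combination (norm := noncomm_ring) h

include σadd σmul tor hJ in
lemma hF2 (x y : R) : δ (x*(y*x)) = x*y*δ x + x*δ y*σ x + δ x*(σ y*σ x) := by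
  have hA := hF1 σadd hJ x (x*y + y*x)
  have hB := hF1 σadd hJ (x*x) y
  have eA1 : x*(x*y+y*x) = x*(x*y) + x*(y*x) := by noncomm_ring
  have eA2 : (x*y+y*x)*x = x*(y*x) + y*(x*x) := by noncomm_ring
  rw [eA1, eA2, map_add, map_add, map_add, σadd, σmul, σmul] at hA
  rw [σmul, show x*x*y = x*(x*y) from mul_assoc x x y] at hB
  have key := tor (δ (x*(y*x)) - (x*y*δ x + x*δ y*σ x + δ x*(σ y*σ x))) (by
    linear_combination (norm := noncomm_ring) hA - hB + x*(hF1 σadd hJ x y)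
      + (hF1 σadd hJ x y)*(σ x) - (hJ x)*(σ y) - y*(hJ x))
  linear_combination (norm := noncomm_ring) key

include σadd σmul tor hJ in
lemma hF3 (x y z : R) : δ (x*(y*z)) + δ (z*(y*x)) =
    x*y*δ z + z*y*δ x + x*δ y*σ z + z*δ y*σ x + δ x*(σ y*σ z) + δ z*(σ y*σ x) := by
  have hB := hF2 σadd σmul tor hJ (x+z) y
  have e : (x+z)*(y*(x+z)) = x*(y*x) + (x*(y*z) + z*(y*x)) + z*(y*z) := by noncomm_ring
  rw [e, map_add, map_add, map_add, σadd, map_add, hF2 σadd σmul tor hJ x y,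
    hF2 σadd σmul tor hJ z y] at hB
  linear_combination (norm := noncomm_ring) hB

include σadd hJ in
lemma hGskew (x y : R) : Gd σ δ x y + Gd σ δ y x = 0 := by
  simp only [Gd]
  linear_combination (norm := noncomm_ring) hF1 σadd hJ x y

include σadd σmul tor hJ in
lemma hF13 (x y z : R) : Gd σ δ x (y*z) + Gd σ δ z (y*x) = x * Gd σ δ z y + z * Gd σ δ x y := by
  simp only [Gd]
  rw [σmul y z, σmul y x]
  linear_combination (norm := noncomm_ring) (hF3 σadd σmul tor hJ x y z)
    - x*(hF1 σadd hJ z y) - z*(hF1 σadd hJ x y)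

include σadd in
lemma σsub' (u v : R) : σ (u - v) = σ u - σ v := by
  have h : σ ((u - v) + v) = σ u := by rw [sub_add_cancel]
  rw [σadd] at h
  linear_combination (norm := noncomm_ring) h

include σadd σmul tor hJ in
lemma hK3 (x u v : R) : Gd σ δ x (u*v - v*u) = Gd σ δ u v * σ x - x * Gd σ δ u v := by
  simp only [Gd]
  have h1 := hF1 σadd hJ x (u*v)
  have h3 := hF3 σadd σmul tor hJ u v x
  have h2 := hF1 σadd hJ u v
  have e : x*(u*v - v*u) = x*(u*v) - x*(v*u) := by noncomm_ring
  have eσ : σ (u*v - v*u) = σ u*σ v - σ v*σ u := by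
    rw [σsub' σadd, σmul, σmul]
  rw [e, map_sub, map_sub, eσ]
  rw [show u*v*x = u*(v*x) from mul_assoc u v x, σmul u v] at h1
  linear_combination (norm := noncomm_ring) h1 - h3 + x*h2

end basic

section semiprime
variable {σ : R → R} {δ : R →+ R}
variable (σadd : ∀ x y : R, σ (x + y) = σ x + σ y)
variable (σmul : ∀ x y : R, σ (x * y) = σ x * σ y)
variable (tor : ∀ x : R, x + x = 0 → x = 0)
variable (sp : ∀ x : R, (∀ a : R, x * a * x = 0) → x = 0)
variable (σsurj : ∀ y : R, ∃ x, σ x = y)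
variable (hJ : ∀ a : R, δ (a*a) = a * δ a + δ a * σ a)

include σadd σmul tor hJ in
lemma hSTAR (x y z : R) :
    (x*y - y*x)*z*(Gd σ δ x y) + (Gd σ δ x y)*(σ z)*(σ (x*y - y*x)) = 0 := by
  simp only [Gd]
  rw [σsub' σadd, σmul, σmul]
  have h1 := hF3 σadd σmul tor hJ (x*y) z (y*x)
  have h2a := hF2 σadd σmul tor hJ x (y*(z*y))
  have h2b := hF2 σadd σmul tor hJ y (x*(z*x))
  rw [show (x*y)*(z*(y*x)) = x*(y*(z*(y*x))) from by noncomm_ring,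
      show (y*x)*(z*(x*y)) = y*(x*(z*(x*y))) from by noncomm_ring,
      σmul y x, σmul x y] at h1
  rw [show x*((y*(z*y))*x) = x*(y*(z*(y*x))) from by noncomm_ring,
      σmul y (z*y), σmul z y] at h2a
  rw [show y*((x*(z*x))*y) = y*(x*(z*(x*y))) from by noncomm_ring,
      σmul x (z*x), σmul z x] at h2b
  linear_combination (norm := noncomm_ring) h1 - h2a - h2b
    - x*(hF2 σadd σmul tor hJ y z)*(σ x) - y*(hF2 σadd σmul tor hJ x z)*(σ y)
    + (x*y*z)*(hF1 σadd hJ x y) + (hF1 σadd hJ x y)*(σ z*σ x*σ y)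

include sp in
lemma flip {e f : R} (h : ∀ w : R, e*w*f = 0) : ∀ w : R, f*w*e = 0 := by
  intro w
  apply sp
  intro z
  calc f*w*e*z*(f*w*e) = f*w*(e*z*f)*(w*e) := by noncomm_ring
    _ = 0 := by rw [h z]; simp

include σadd σmul tor sp σsurj hJ in
lemma hE5 (x y : R) : ∀ w : R, Gd σ δ x y * w * σ (x*y - y*x) = 0 := by
  have hst := hSTAR σadd σmul tor hJ x y
  have ha : ∀ z u : R, Gd σ δ x y*(σ z)*(σ (x*y-y*x))*(σ u)*(σ (x*y-y*x)) = 0 := by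
    intro z u
    have h1 := hst (z*((x*y-y*x)*u))
    rw [σmul z ((x*y-y*x)*u), σmul (x*y-y*x) u] at h1
    have h2 := hst u
    have h3 := hst z
    have key := tor (Gd σ δ x y*(σ z)*(σ (x*y-y*x))*(σ u)*(σ (x*y-y*x)) - 0) (by
      linear_combination (norm := noncomm_ring) h1 + h3*(σ u*σ (x*y-y*x))
        - ((x*y-y*x)*z)*h2)
    linear_combination (norm := noncomm_ring) key
  have hb : ∀ w u : R, Gd σ δ x y*w*(σ (x*y-y*x))*u*(σ (x*y-y*x)) = 0 := by
    intro w u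
    obtain ⟨z, hz⟩ := σsurj w
    obtain ⟨u', hu⟩ := σsurj u
    have := ha z u'
    rw [hz, hu] at this
    exact this
  intro w
  have hc := flip sp (hb w)
  apply sp
  intro v
  calc Gd σ δ x y*w*σ (x*y-y*x)*v*(Gd σ δ x y*w*σ (x*y-y*x))
      = Gd σ δ x y*w*(σ (x*y-y*x)*v*(Gd σ δ x y*w*σ (x*y-y*x))) := by noncomm_ring
    _ = 0 := by rw [hc v, mul_zero]

include σadd σmul tor sp σsurj hJ in
lemma hE6 (x y : R) : ∀ w : R, (x*y - y*x)*w*(Gd σ δ x y) = 0 := by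
  intro w
  have h5 := hE5 σadd σmul tor sp σsurj hJ x y (σ w)
  linear_combination (norm := noncomm_ring) hSTAR σadd σmul tor hJ x y w - h5

include σadd in
lemma Gadd2 (x y y' : R) : Gd σ δ x (y+y') = Gd σ δ x y + Gd σ δ x y' := by
  simp only [Gd]
  rw [mul_add, map_add, map_add, σadd]
  noncomm_ring

lemma Gadd1 (x x' y : R) : Gd σ δ (x+x') y = Gd σ δ x y + Gd σ δ x' y := by
  simp only [Gd]
  rw [add_mul, map_add, map_add]
  noncomm_ring

include σadd σmul tor sp σsurj hJ in
lemma hS2 (x y y' : R) : ∀ w : R, Gd σ δ x y*w*(σ (x*y' - y'*x)) = 0 := by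
  have E5i := hE5 σadd σmul tor sp σsurj hJ (δ := δ)
  intro w
  have hL := E5i x (y+y') w
  rw [Gadd2 σadd, show x*(y+y') - (y+y')*x = (x*y - y*x) + (x*y' - y'*x) from by noncomm_ring,
    σadd] at hL
  have hlin : Gd σ δ x y*w*(σ (x*y' - y'*x)) + Gd σ δ x y'*w*(σ (x*y - y*x)) = 0 := by
    linear_combination (norm := noncomm_ring) hL - E5i x y w - E5i x y' w
  have hfl := flip sp (E5i x y')
  apply sp
  intro z
  linear_combination (norm := noncomm_ring)
    (Gd σ δ x y*w*(σ (x*y' - y'*x))*z)*hlin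
    - (Gd σ δ x y*w)*(hfl z)*(w*σ (x*y - y*x))

include σadd σmul tor sp σsurj hJ in
lemma hS3 (x y x' y' : R) : ∀ w : R, Gd σ δ x y*w*(σ (x'*y' - y'*x')) = 0 := by
  have S2i := hS2 σadd σmul tor sp σsurj hJ (δ := δ)
  intro w
  have hL := S2i (x+x') y y' w
  rw [Gadd1 (σ := σ), show (x+x')*y' - y'*(x+x') = (x*y' - y'*x) + (x'*y' - y'*x') from by
    noncomm_ring, σadd] at hL
  have hlin : Gd σ δ x y*w*(σ (x'*y' - y'*x')) + Gd σ δ x' y*w*(σ (x*y' - y'*x)) = 0 := by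
    linear_combination (norm := noncomm_ring) hL - S2i x y y' w - S2i x' y y' w
  have hfl := flip sp (S2i x' y y')
  apply sp
  intro z
  linear_combination (norm := noncomm_ring)
    (Gd σ δ x y*w*(σ (x'*y' - y'*x'))*z)*hlin
    - (Gd σ δ x y*w)*(hfl z)*(w*σ (x*y' - y'*x))

include σadd σmul tor sp σsurj hJ in
lemma hL6 (x y : R) : ∀ (w p q : R), Gd σ δ x y*w*(p*q - q*p) = 0 := by
  intro w p q
  obtain ⟨p', hp⟩ := σsurj p
  obtain ⟨q', hq⟩ := σsurj q
  have h := hS3 σadd σmul tor sp σsurj hJ x y p' q' w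
  rw [σsub' σadd, σmul, σmul, hp, hq] at h
  exact h

include σadd σmul tor sp σsurj hJ in
lemma hL6' (x y : R) : ∀ (w p q : R), (p*q - q*p)*w*(Gd σ δ x y) = 0 := by
  intro w p q
  exact flip sp (fun w' => hL6 σadd σmul tor sp σsurj hJ x y w' p q) w

include σadd σmul tor sp σsurj hJ in
lemma hCENT (x y : R) : ∀ r : R, Gd σ δ x y*r = r*(Gd σ δ x y) := by
  intro r
  have L6i := hL6 σadd σmul tor sp σsurj hJ (δ := δ) x y
  have hz : Gd σ δ x y*r - r*(Gd σ δ x y) = 0 := by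
    apply sp
    intro w
    linear_combination (norm := noncomm_ring) L6i (r*w) (Gd σ δ x y) r
      - r*(L6i w (Gd σ δ x y) r)
  linear_combination (norm := noncomm_ring) hz

end semiprime

section core
variable {σ : R → R} {δ : R →+ R}
variable (σadd : ∀ x y : R, σ (x + y) = σ x + σ y)
variable (σmul : ∀ x y : R, σ (x * y) = σ x * σ y)
variable (tor : ∀ x : R, x + x = 0 → x = 0)
variable (sp : ∀ x : R, (∀ a : R, x * a * x = 0) → x = 0)
variable (σsurj : ∀ y : R, ∃ x, σ x = y)
variable (hJ : ∀ a : R, δ (a*a) = a * δ a + δ a * σ a)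

include σadd σmul tor sp σsurj hJ in
lemma core (a b : R) : Gd σ δ a b = 0 := by
  have F1i := hF1 σadd hJ
  have F13i := hF13 σadd σmul tor hJ
  have K3i := hK3 σadd σmul tor hJ
  have SKi := hGskew σadd hJ (δ := δ)
  have L6g := hL6 σadd σmul tor sp σsurj hJ (δ := δ)
  have L6g' := hL6' σadd σmul tor sp σsurj hJ (δ := δ)
  have CENTi := hCENT σadd σmul tor sp σsurj hJ (δ := δ)
  have σone : σ 1 = (1 : R) := by
    obtain ⟨e, he⟩ := σsurj 1
    have h := σmul 1 e
    rw [one_mul, he, mul_one] at h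
    exact h.symm
  have σs : ∀ u v : R, σ (u - v) = σ u - σ v := σsub' σadd
  set t := Gd σ δ a b with ht
  set c := a*b - b*a with hc
  have tL6 : ∀ w p q : R, t*w*(p*q - q*p) = 0 := fun w p q => L6g a b w p q
  have tL6' : ∀ w p q : R, (p*q - q*p)*w*t = 0 := fun w p q => L6g' a b w p q
  have hcen : ∀ r : R, t*r = r*t := fun r => CENTi a b r
  have hsw : ∀ pre p q suf : R, t*pre*(p*q)*suf = t*pre*(q*p)*suf := by
    intro pre p q suf
    linear_combination (norm := noncomm_ring) (tL6 pre p q)*suf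
  have hKc : ∀ u s : R, t*u*c*s = 0 := by
    intro u s; rw [hc]; linear_combination (norm := noncomm_ring) (tL6 u a b)*s
  have hKsc : ∀ u s : R, t*u*(σ c)*s = 0 := by
    intro u s
    rw [hc, σs, σmul, σmul]
    linear_combination (norm := noncomm_ring) (tL6 u (σ a) (σ b))*s
  have hKsc' : ∀ pre u : R, pre*(σ c)*u*t = 0 := by
    intro pre u; rw [hc, σs, σmul, σmul]
    linear_combination (norm := noncomm_ring) pre*(tL6' u (σ a) (σ b))
  have hKc' : ∀ pre u : R, pre*c*u*t = 0 := by
    intro pre u; rw [hc]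
    linear_combination (norm := noncomm_ring) pre*(tL6' u a b)
  have hKmp : ∀ p u s : R, t*u*(p*c - c*p)*s = 0 := by
    intro p u s; linear_combination (norm := noncomm_ring) (tL6 u p c)*s
  have hEXF : ∀ u v x : R,
      t*x*(δ (u*v - v*u)) + t*(δ x)*(σ (u*v - v*u)) + (δ t)*(σ x)*(σ (u*v - v*u))
        + (u*v - v*u)*(Gd σ δ t x) + (Gd σ δ u v)*(σ x)*(σ t) - x*t*(Gd σ δ u v) = 0 := by
    intro u v x
    have hz : t*(x*(u*v - v*u)) = 0 := by
      linear_combination (norm := noncomm_ring) tL6 x u v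
    have hzd : δ (t*(x*(u*v - v*u))) = 0 := by rw [hz]; exact map_zero δ
    have h13 := F13i t x (u*v - v*u)
    have hs1 := SKi x (u*v - v*u)
    have hs2 := SKi (x*t) (u*v - v*u)
    have hk := K3i (x*t) u v
    simp only [Gd, mul_sub, sub_mul, map_sub, σs, σmul] at hzd h13 hs1 hs2 hk ⊢
    linear_combination (norm := noncomm_ring) hzd - h13 - t*hs1 + hs2 - hk
  have hE2F : ∀ u v x : R,
      (u*v - v*u)*(δ (x*t)) + (δ (u*v - v*u))*(σ x)*(σ t) + x*t*(Gd σ δ u v)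
        - (Gd σ δ u v)*(σ x)*(σ t) = 0 := by
    intro u v x
    have hz : (u*v - v*u)*(x*t) = 0 := by
      linear_combination (norm := noncomm_ring) tL6' x u v
    have hzd : δ ((u*v - v*u)*(x*t)) = 0 := by rw [hz]; exact map_zero δ
    have hs2 := SKi (x*t) (u*v - v*u)
    have hk := K3i (x*t) u v
    simp only [Gd, mul_sub, sub_mul, map_sub, σs, σmul] at hzd hs2 hk ⊢
    linear_combination (norm := noncomm_ring) hzd - hs2 + hk
  have hL12ab : ∀ x w : R, t*x*(δ c)*w*t + t*(σ x)*(σ t)*w*t - x*t*t*w*t = 0 := by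
    intro x w
    have h := hEXF a b x
    rw [← hc, ← ht] at h
    linear_combination (norm := noncomm_ring) h*(w*t)
      - (hKsc (δ x) (w*t)) - (hKsc' ((δ t)*(σ x)) w) - (hKc' 1 ((Gd σ δ t x)*w))
  have hL12p : ∀ p x w : R, t*x*(δ (p*c - c*p))*w*t + (Gd σ δ p c)*(σ x)*(σ t)*w*t
      - x*t*(Gd σ δ p c)*w*t = 0 := by
    intro p x w
    have h := hEXF p c x
    rw [show σ (p*c - c*p) = σ p*σ c - σ c*σ p from by rw [σs, σmul, σmul]] at h
    linear_combination (norm := noncomm_ring) h*(w*t)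
      - (hsw (δ x) (σ p) (σ c) (w*t)) - ((δ t)*(σ x))*(tL6' w (σ p) (σ c))
      - (tL6' ((Gd σ δ t x)*w) p c)
  have hK2 : ∀ p : R, Gd σ δ p c = t*(σ p) - p*t := by
    intro p
    have h := K3i p a b
    rw [← hc, ← ht] at h
    exact h
  have hDMP : ∀ p : R, δ (p*c - c*p) = Gd σ δ p c + Gd σ δ p c + p*(δ c) + (δ p)*(σ c)
      - c*(δ p) - (δ c)*(σ p) := by
    intro p
    rw [map_sub]
    simp only [Gd]
    linear_combination (norm := noncomm_ring) -(F1i p c)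
  have hL1 : t + t = δ c + b*(δ a) + (δ b)*(σ a) - a*(δ b) - (δ a)*(σ b) := by
    rw [ht, hc]
    simp only [Gd, map_sub]
    linear_combination (norm := noncomm_ring) F1i a b
  have hL15 : ∀ w : R, t*t*t*w*(δ c) = t*t*t*t*w - t*t*t*w*(σ t) := by
    intro w
    have h12one := hL12ab 1 w
    rw [σone] at h12one
    linear_combination (norm := noncomm_ring) (t)*(h12one) + (hsw ((t)*(t)) (w) (δ c) ((1:R))) + (hsw ((t)*(t)) (w) (σ t) ((1:R))) - (hsw ((t)*(δ c)) (w) (t) ((1:R))) - (hsw ((t)) (δ c) (t) ((w))) - (hsw ((t)*(σ t)) (w) (t) ((1:R))) - (hsw ((t)) (σ t) (t) ((w))) + (hsw ((t)*(t)) (w) (t) ((1:R)))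
  have hG3 : ∀ x w : R, t*t*t*x*w*(σ t) = t*t*t*w*(σ x)*(σ t) := by
    intro x w
    linear_combination (norm := noncomm_ring) - (t)*(hL12ab x w) + (hL15 (x*w)) - (hsw ((t)*(t)) (w) (σ x) ((σ t))) - (hsw ((t)*(t)*(σ x)) (w) (σ t) ((1:R))) - (hsw ((t)*(t)) (σ x) (σ t) ((w))) + (hsw ((t)) (x) (δ c) ((w)*(t))) + (hsw ((t)*(δ c)) (x) (w) ((t))) + (hsw ((t)*(δ c)*(w)) (x) (t) ((1:R))) + (hsw ((t)*(δ c)) (w) (t) ((x))) + (hsw ((t)) (δ c) (t) ((w)*(x))) + (hsw ((t)) (σ x) (σ t) ((w)*(t))) + (hsw ((t)*(σ t)*(σ x)) (w) (t) ((1:R))) + (hsw ((t)*(σ t)) (σ x) (t) ((w))) + (hsw ((t)) (σ t) (t) ((σ x)*(w))) - (hsw ((1:R)) (x) (t) ((t)*(w)*(t))) - (hsw ((t)) (x) (t) ((w)*(t))) - (hsw ((t)*(t)) (x) (w) ((t))) - (hsw ((t)*(t)*(w)) (x) (t) ((1:R))) - (hsw ((t)*(t)) (w) (t) ((x))) - (hsw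 ((t)*(t)) (x) (w) ((δ c))) - (hsw ((t)*(t)*(w)) (x) (δ c) ((1:R))) - (hsw ((t)*(t)) (w) (δ c) ((x))) + (hsw ((t)*(t)*(t)) (x) (w) ((1:R)))
  have hFORM : ∀ p y : R, t*t*t*y*(δ (p*c - c*p)) = -(t*t*t*t*y*(p - σ p))
      - t*t*t*y*(p - σ p)*(σ t) := by
    intro p y
    linear_combination (norm := noncomm_ring) (t*t*t*y)*(hDMP p) + (t*t*t)*(hK2 p)*(y) + (t*t*t)*(hK2 p)*(y) + (hL15 (y*p)) - (hL15 (y*σ p)) + (hsw ((t)*(t)*(t)) (y) (p) ((1:R))) + (hsw ((t)*(t)*(t)) (y) (p) ((1:R))) - (hsw ((t)*(t)*(t)) (y) (σ p) ((1:R))) - (hsw ((t)*(t)*(t)) (y) (σ p) ((1:R))) + (hsw ((t)*(t)) (y) (Gd σ δ p c) ((1:R))) + (hsw ((t)*(t)) (y) (Gd σ δ p c) ((1:R))) + (hKsc ((t)*(t)*(y)*(δ p)) ((1:R))) - (hKc ((t)*(t)*(y)) ((δ p))) - (hsw ((t)*(t)) (y) (δ c) ((σ p))) - (hsw ((t)*(t)*(δ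 c)) (y) (σ p) ((1:R))) - (hsw ((t)*(t)) (p) (t) ((y))) - (hsw ((t)*(t)) (p) (t) ((y))) + (hsw ((t)*(t)) (y) (σ p) ((δ c))) + (hsw ((t)*(t)*(σ p)) (y) (δ c) ((1:R))) + (hsw ((t)*(t)) (σ p) (δ c) ((y)))
  have hMIX2 : ∀ p x w : R, t*t*t*x*w*(p - σ p)*(σ t) + t*t*t*w*(p - σ p)*(σ x)*(σ t) = 0 := by
    intro p x w
    linear_combination (norm := noncomm_ring) - (t)*(hL12p p x w) + (t*t)*(hK2 p)*(σ x*σ t*w) - (t*t*t)*(hK2 p)*(x*w) + (hFORM p (x*w)) + (hsw ((t)*(t)) (w) (p) ((σ x)*(σ t))) + (hsw ((t)*(t)*(p)) (w) (σ x) ((σ t))) + (hsw ((t)*(t)*(p)*(σ x)) (w) (σ t) ((1:R))) + (hsw ((t)*(t)*(p)) (σ x) (σ t) ((w))) - (hsw ((t)*(t)) (w) (σ p) ((σ x)*(σ t))) - (hsw ((t)*(t)*(σ p)) (w) (σ x) ((σ t))) - (hsw ((t)*(t)*(σ p)*(σ x)) (w) (σ t) ((1:R))) - (hsw ((t)*(t)*(σ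 p)) (σ x) (σ t) ((w))) + (hsw ((t)) (x) (δ (p*c - c*p)) ((w)*(t))) + (hsw ((t)*(δ (p*c - c*p))) (x) (w) ((t))) + (hsw ((t)*(δ (p*c - c*p))*(w)) (x) (t) ((1:R))) + (hsw ((t)*(δ (p*c - c*p))) (w) (t) ((x))) + (hsw ((t)) (δ (p*c - c*p)) (t) ((w)*(x))) + (hsw ((Gd σ δ p c)) (σ x) (σ t) ((w)*(t))) + (hsw ((Gd σ δ p c)*(σ t)*(σ x)) (w) (t) ((1:R))) + (hsw ((Gd σ δ p c)*(σ t)) (σ x) (t) ((w))) + (hsw ((Gd σ δ p c)) (σ t) (t) ((σ x)*(w))) + (hsw ((1:R)) (Gd σ δ p c) (t) ((σ t)*(σ x)*(w))) - (hsw ((1:R)) (x) (t) ((Gd σ δ p c)*(w)*(t))) - (hsw ((t)) (x) (Gd σ δ p c) ((w)*(t))) - (hsw ((t)*(Gd σ δ p c)) (x) (w) ((t))) - (hsw ((t)*(Gd σ δ p c)*(w)) (x) (t) ((1:R))) - (hsw ((t)*(Gd σ δ p c)) (w) (t) ((x))) - (hsw ((t)) (Gd σ δ p c) (t) ((w)*(x)))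 - (hsw ((t)*(Gd σ δ p c)) (σ x) (σ t) ((w))) + (hsw ((t)*(t)*(σ p)) (σ x) (σ t) ((w))) - (hsw ((t)) (p) (t) ((σ x)*(σ t)*(w))) - (hsw ((t)*(t)*(p)) (σ x) (σ t) ((w))) + (hsw ((t)*(t)*(Gd σ δ p c)) (x) (w) ((1:R))) - (hsw ((t)*(t)*(t)*(σ p)) (x) (w) ((1:R))) + (hsw ((t)*(t)) (p) (t) ((x)*(w))) + (hsw ((t)*(t)*(t)*(p)) (x) (w) ((1:R))) - (hsw ((t)*(t)) (x) (w) ((δ (p*c - c*p)))) - (hsw ((t)*(t)*(w)) (x) (δ (p*c - c*p)) ((1:R))) - (hsw ((t)*(t)) (w) (δ (p*c - c*p)) ((x))) - (hsw ((t)*(t)*(t)) (x) (w) ((p))) - (hsw ((t)*(t)*(t)*(w)) (x) (p) ((1:R))) - (hsw ((t)*(t)*(t)) (w) (p) ((x))) + (hsw ((t)*(t)*(t)) (x) (w) ((σ p))) + (hsw ((t)*(t)*(t)*(w)) (x) (σ p) ((1:R))) + (hsw ((t)*(t)*(t)) (w) (σ p) ((x)))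
  have hMIX3 : ∀ p x w : R, t*t*t*x*w*(p - σ p)*(σ t) = 0 := by
    intro p x w
    have key := tor (t*t*t*x*w*(p - σ p)*(σ t) - 0) (by
      linear_combination (norm := noncomm_ring) (hMIX2 p x w) + (hG3 x (w*(p - σ p))))
    linear_combination (norm := noncomm_ring) key
  have hMIX6 : ∀ p x : R, t*t*t*t*t*x*(p - σ p) = 0 := by
    intro p x
    linear_combination (norm := noncomm_ring) - (t*t*t)*(hE2F p c x) + (hFORM p (σ x*σ t)) - (hMIX3 p 1 (σ x*σ t)) + (t*t*t*t)*(hK2 p)*(x) - (t*t*t)*(hK2 p)*(σ x*σ t) + (hsw ((t)*(t)*(t)*(t)) (x) (p) ((1:R))) - (hsw ((t)*(t)*(t)*(t)) (x) (σ p) ((1:R))) + (hKmp p ((t)*(t)) ((δ (x*t)))) + (hsw ((t)*(t)*(δ (p*c - c*p))) (σ x) (σ t) ((1:R))) + (hsw ((t)*(t)) (x) (t) ((Gd σ δ p c))) + (hsw ((t)*(t)*(t)) (x) (Gd σ δ p c) ((1:R))) - (hsw ((t)*(t)) (σ x) (σ t) ((δ (p*c - c*p)))) - (hsw ((t)*(t)*(σ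 t)) (σ x) (δ (p*c - c*p)) ((1:R))) - (hsw ((t)*(t)) (σ t) (δ (p*c - c*p)) ((σ x))) - (hsw ((t)*(t)*(t)) (σ x) (σ t) ((p))) - (hsw ((t)*(t)*(t)*(σ t)) (σ x) (p) ((1:R))) - (hsw ((t)*(t)*(t)) (σ t) (p) ((σ x))) + (hsw ((t)*(t)*(t)) (σ x) (σ t) ((σ p))) + (hsw ((t)*(t)*(t)*(σ t)) (σ x) (σ p) ((1:R))) + (hsw ((t)*(t)*(t)) (σ t) (σ p) ((σ x))) - (hsw ((t)*(t)*(t)) (p) (t) ((x))) - (hsw ((t)*(t)*(t)*(σ p)) (σ x) (σ t) ((1:R))) + (hsw ((t)*(t)) (p) (t) ((σ x)*(σ t))) + (hsw ((t)*(t)*(t)*(p)) (σ x) (σ t) ((1:R)))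
  have hFIN : ∀ w : R, t*t*t*t*t*t*w + t*t*t*t*t*t*w = 0 := by
    intro w
    linear_combination (norm := noncomm_ring) (t*t*t*t*t*w)*(hL1) + (t*t)*(hL15 w) - (hMIX6 a (w*δ b)) + (hMIX6 b (w*δ a)) + (hMIX6 t w) - (hsw ((t)*(t)*(t)*(t)) (w) (t) ((1:R))) - (hsw ((t)*(t)*(t)*(t)) (w) (t) ((1:R))) - (hsw ((t)*(t)*(t)*(t)) (w) (t) ((1:R))) + (hsw ((t)*(t)*(t)*(t)) (w) (b) ((δ a))) + (hsw ((t)*(t)*(t)*(t)*(b)) (w) (δ a) ((1:R))) + (hsw ((t)*(t)*(t)*(t)) (b) (δ a) ((w))) - (hsw ((t)*(t)*(t)*(t)) (w) (a) ((δ b))) - (hsw ((t)*(t)*(t)*(t)*(a)) (w) (δ b) ((1:R))) - (hsw ((t)*(t)*(t)*(t)) (a) (δ b) ((w))) + (hsw ((t)*(t)*(t)*(t)) (w) (δ b) ((a))) + (hsw ((t)*(t)*(t)*(t)*(δ b)) (w) (a) ((1:R))) - (hsw ((t)*(t)*(t)*(t)) (w) (δ a) ((b))) - (hsw ((t)*(t)*(t)*(t)*(δ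 a)) (w) (b) ((1:R)))
  have hT6 : ∀ w : R, t*t*t*t*t*t*w = 0 := fun w => tor _ (hFIN w)
  have hT3 : t*t*t = 0 := by
    apply sp
    intro w
    linear_combination (norm := noncomm_ring) hT6 w + (hsw (t*t) w t (t*t))
      + (hsw (t*t*t) w t t) + (hsw (t*t*t*t) w t 1)
  have hT2 : t*t = 0 := by
    apply sp
    intro w
    have e : t*t*w*(t*t) = t*t*t*(w*t) := by
      linear_combination (norm := noncomm_ring) hsw t w t t
    rw [e, hT3, zero_mul]
  have hT1 : t = 0 := by
    apply sp
    intro w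
    have e : t*w*t = t*t*w := by linear_combination (norm := noncomm_ring) hsw 1 w t 1
    rw [e, hT2, zero_mul]
  exact hT1

include σadd σmul tor sp σsurj hJ in
lemma aux (a b : R) : δ (a*b) = a*(δ b) + (δ a)*(σ b) := by
  have h := core σadd σmul tor sp σsurj hJ a b
  simp only [Gd] at h
  linear_combination (norm := noncomm_ring) h

end core

end JordanAB


/-- Lemma 2: every Jordan (α,β)-derivation of a 2-torsion free semiprime ring is an
(α,β)-derivation. -/
theorem stmt_2 {R : Type*} [Ring R]
    (htorsion : ∀ x : R, x + x = 0 → x = 0)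
    (hsemiprime : ∀ x : R, (∀ a : R, x * a * x = 0) → x = 0)
    (α β : R ≃+* R) (δ : R →+ R)
    (hJordan : ∀ a : R, δ (a * a) = α a * δ a + δ a * β a) :
    ∀ a b : R, δ (a * b) = α a * δ b + δ a * β b := by
  intro a b
  set σ : R → R := fun x => β (α.symm x) with hσ
  set δ' : R →+ R :=
    { toFun := fun x => δ (α.symm x)
      map_zero' := by simp
      map_add' := by intro x y; simp [map_add] } with hδ'
  have σadd : ∀ x y : R, σ (x + y) = σ x + σ y := by
    intro x y; simp [hσ, map_add]
  have σmul : ∀ x y : R, σ (x * y) = σ x * σ y := by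
    intro x y; simp [hσ, map_mul]
  have σsurj : ∀ y : R, ∃ x, σ x = y := by
    intro y; exact ⟨α (β.symm y), by simp [hσ]⟩
  have hJ' : ∀ x : R, δ' (x * x) = x * δ' x + δ' x * σ x := by
    intro x
    have h := hJordan (α.symm x)
    have e1 : δ' (x * x) = δ (α.symm x * α.symm x) := by
      simp [hδ', map_mul]
    rw [e1, h]
    simp [hδ', hσ]
  have key := JordanAB.aux σadd σmul htorsion hsemiprime σsurj hJ' (α a) (α b)
  have e2 : δ' (α a * α b) = δ (a * b) := by
    simp [hδ', ← map_mul]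
  have e3 : δ' (α b) = δ b := by simp [hδ']
  have e4 : δ' (α a) = δ a := by simp [hδ']
  have e5 : σ (α b) = β b := by simp [hσ]
  rw [e2, e3, e4, e5] at key
  exact key
end

section
/- Let A be a semiprime algebra, α an automorphism, and φ: A → A linear with α(A₁₂)·φ(A₁₂) = 0 and φ(A₁₂)·α(A₁₂) = 0 for all A₁₂ ∈ P₁AP₂ (P₁ idempotent, P₂ = 1 − P₁). Then α(P₂)·φ(A₁₂)·α(P₁) = 0 for all A₁₂ ∈ P₁AP₂. -/
/-- In a semiprime algebra, the two-sided annihilation conditions on the (1,2)-corner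
force α(P₂)·φ(A₁₂)·α(P₁) = 0. -/
theorem stmt_8 {F A : Type*} [Field F] [Ring A] [Algebra F A]
    (hsemiprime : ∀ x : A, (∀ a : A, x * a * x = 0) → x = 0)
    (α : A ≃ₐ[F] A) (P₁ P₂ : A) (hP₁ : P₁ * P₁ = P₁) (hP₂ : P₂ = 1 - P₁)
    (φ : A →ₗ[F] A)
    (h1 : ∀ A₁₂ : A, P₁ * A₁₂ * P₂ = A₁₂ → α A₁₂ * φ A₁₂ = 0)
    (h2 : ∀ A₁₂ : A, P₁ * A₁₂ * P₂ = A₁₂ → φ A₁₂ * α A₁₂ = 0) :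
    ∀ A₁₂ : A, P₁ * A₁₂ * P₂ = A₁₂ → α P₂ * φ A₁₂ * α P₁ = 0 := by
  have hP₂sq : P₂ * P₂ = P₂ := by
    rw [hP₂, sub_mul, mul_sub, mul_sub, mul_one, one_mul, mul_one, hP₁]; abel
  have lin2 : ∀ X Y : A, P₁ * X * P₂ = X → P₁ * Y * P₂ = Y →
      φ X * α Y + φ Y * α X = 0 := by
    intro X Y hX hY
    have h := h2 (X + Y) (by rw [mul_add, add_mul, hX, hY])
    rw [map_add, map_add, add_mul, mul_add, mul_add] at h
    rw [h2 X hX, h2 Y hY] at h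
    rw [zero_add, add_zero] at h
    exact h
  intro A₁₂ hA
  apply hsemiprime
  intro a
  set B := P₁ * α.symm a * P₂ with hBdef
  have hB : P₁ * B * P₂ = B := by
    rw [hBdef]
    calc P₁ * (P₁ * α.symm a * P₂) * P₂
        = (P₁ * P₁) * α.symm a * (P₂ * P₂) := by noncomm_ring
      _ = P₁ * α.symm a * P₂ := by rw [hP₁, hP₂sq]
  have hαB : α P₁ * a * α P₂ = α B := by
    rw [hBdef, map_mul, map_mul, AlgEquiv.apply_symm_apply]
  have key : φ A₁₂ * α B * φ A₁₂ = 0 := by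
    have hφB : φ A₁₂ * α B = -(φ B * α A₁₂) :=
      eq_neg_of_add_eq_zero_left (lin2 A₁₂ B hA hB)
    rw [hφB, neg_mul, mul_assoc, h1 A₁₂ hA, mul_zero, neg_zero]
  calc α P₂ * φ A₁₂ * α P₁ * a * (α P₂ * φ A₁₂ * α P₁)
      = α P₂ * (φ A₁₂ * (α P₁ * a * α P₂) * φ A₁₂) * α P₁ := by noncomm_ring
    _ = 0 := by rw [hαB, key, mul_zero, zero_mul]
end

section
/- Let A be a unital algebra, P₁ an idempotent with P₂ = 1 − P₁, α an automorphism, and φ: A → A linear with: φ(P₁AP₁) ⊆ α(P₁)·A·α(P₁), φ(P₂AP₂) = {0} (with P₂AP₂ one-dimensional spanned by P₂), φ(P₁AP₂) ⊆ α(P₁)·A·α(P₂), φ(P₂AP₁) ⊆ α(P₂)·A·α(P₁), and the multiplicativity relations φ(AB) = φ(A)α(B) + α(A)φ(B) hold in the cases (A,B) ∈ (P₁AP₁)×(P₁AP₁), (P₁AP₁)×(P₁AP₂), (P₁AP₂)×(P₂AP₁), (P₁AP₂)×(P₂AP₂), (P₂AP₂)×(P₂AP₁), (P₂AP₂)×(P₂AP₂),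 (P₂AP₁)×(P₁AP₁), and (P₂AP₁)×(P₁AP₂). Then φ is an (α,α)-derivation on A: φ(AB) = φ(A)α(B) + α(A)φ(B) for all A, B ∈ A. -/
/-- Auxiliary: mixed-corner case is automatic. -/
theorem aux_mixed {F A : Type*} [Field F] [Ring A] [Algebra F A]
    (α : A ≃ₐ[F] A) (φ : A →ₗ[F] A) (p q r s x y : A)
    (hx : p * x * q = x) (hy : r * y * s = y) (hqr : q * r = 0)
    (hφx : α p * φ x * α q = φ x ∨ φ x = 0)
    (hφy : α r * φ y * α s = φ y ∨ φ y = 0) :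
    φ (x * y) = φ x * α y + α x * φ y := by
  have hxy : x * y = 0 := by
    conv_lhs => rw [← hx, ← hy]
    have h : p * x * q * (r * y * s) = p * x * (q * r) * (y * s) := by
      simp [mul_assoc]
    rw [h, hqr, mul_zero, zero_mul]
  have h1 : φ x * α y = 0 := by
    rcases hφx with h | h
    · conv_lhs => rw [← h, ← hy]
      have h2 : α p * φ x * α q * α (r * y * s)
          = α p * φ x * (α q * α r) * (α y * α s) := by
        simp [map_mul, mul_assoc]
      rw [h2, show α q * α r = 0 by rw [← map_mul, hqr, map_zero], mul_zero, zero_mul]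
    · rw [h, zero_mul]
  have h2 : α x * φ y = 0 := by
    rcases hφy with h | h
    · conv_lhs => rw [← h, ← hx]
      have h3 : α (p * x * q) * (α r * φ y * α s)
          = α p * α x * (α q * α r) * (φ y * α s) := by
        simp [map_mul, mul_assoc]
      rw [h3, show α q * α r = 0 by rw [← map_mul, hqr, map_zero], mul_zero, zero_mul]
    · rw [h, mul_zero]
  rw [hxy, map_zero, h1, h2, add_zero]
set_option maxHeartbeats 1000000 in
/-- From the corner inclusions and the eight same-index product rules, φ is an
(α,α)-derivation on all of A. -/
theorem stmt_11 {F A : Type*} [Field F] [Ring A] [Algebra F A]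
    (α : A ≃ₐ[F] A) (P₁ P₂ : A) (hP₁ : P₁ * P₁ = P₁) (hP₂ : P₂ = 1 - P₁)
    (φ : A →ₗ[F] A)
    (hc11 : ∀ x : A, P₁ * x * P₁ = x → α P₁ * φ x * α P₁ = φ x)
    (hc22 : ∀ x : A, P₂ * x * P₂ = x → φ x = 0)
    (hdim : ∀ x : A, P₂ * x * P₂ = x → ∃ μ : F, x = μ • P₂)
    (hc12 : ∀ x : A, P₁ * x * P₂ = x → α P₁ * φ x * α P₂ = φ x)
    (hc21 : ∀ x : A, P₂ * x * P₁ = x → α P₂ * φ x * α P₁ = φ x)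
    (hm1 : ∀ x y : A, P₁ * x * P₁ = x → P₁ * y * P₁ = y →
      φ (x * y) = φ x * α y + α x * φ y)
    (hm2 : ∀ x y : A, P₁ * x * P₁ = x → P₁ * y * P₂ = y →
      φ (x * y) = φ x * α y + α x * φ y)
    (hm3 : ∀ x y : A, P₁ * x * P₂ = x → P₂ * y * P₁ = y →
      φ (x * y) = φ x * α y + α x * φ y)
    (hm4 : ∀ x y : A, P₁ * x * P₂ = x → P₂ * y * P₂ = y →
      φ (x * y) = φ x * α y + α x * φ y)
    (hm5 : ∀ x y : A, P₂ * x * P₂ = x → P₂ * y * P₁ = y →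
      φ (x * y) = φ x * α y + α x * φ y)
    (hm6 : ∀ x y : A, P₂ * x * P₂ = x → P₂ * y * P₂ = y →
      φ (x * y) = φ x * α y + α x * φ y)
    (hm7 : ∀ x y : A, P₂ * x * P₁ = x → P₁ * y * P₁ = y →
      φ (x * y) = φ x * α y + α x * φ y)
    (hm8 : ∀ x y : A, P₂ * x * P₁ = x → P₁ * y * P₂ = y →
      φ (x * y) = φ x * α y + α x * φ y) :
    ∀ X Y : A, φ (X * Y) = φ X * α Y + α X * φ Y := by
  -- basic idempotent facts
  have h12 : P₁ * P₂ = 0 := by rw [hP₂, mul_sub, mul_one, hP₁, sub_self]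
  have h21 : P₂ * P₁ = 0 := by rw [hP₂, sub_mul, one_mul, hP₁, sub_self]
  have hP₂i : P₂ * P₂ = P₂ := by
    rw [hP₂, sub_mul, one_mul, mul_sub, mul_one, hP₁]; abel
  have hsum : P₁ + P₂ = 1 := by rw [hP₂]; abel
  intro X Y
  -- Peirce components
  have hdec : ∀ Z : A, Z = P₁*Z*P₁ + P₁*Z*P₂ + P₂*Z*P₁ + P₂*Z*P₂ := by
    intro Z
    have h : P₁*Z*P₁ + P₁*Z*P₂ + P₂*Z*P₁ + P₂*Z*P₂ = (P₁+P₂)*Z*(P₁+P₂) := by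
      rw [add_mul, add_mul, mul_add, mul_add]; abel
    rw [h, hsum, one_mul, mul_one]
  -- corner stability
  have c11 : ∀ Z : A, P₁ * (P₁*Z*P₁) * P₁ = P₁*Z*P₁ := by
    intro Z; rw [show P₁ * (P₁*Z*P₁) * P₁ = (P₁*P₁)*Z*(P₁*P₁) by simp [mul_assoc], hP₁]
  have c12 : ∀ Z : A, P₁ * (P₁*Z*P₂) * P₂ = P₁*Z*P₂ := by
    intro Z; rw [show P₁ * (P₁*Z*P₂) * P₂ = (P₁*P₁)*Z*(P₂*P₂) by simp [mul_assoc], hP₁, hP₂i]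
  have c21 : ∀ Z : A, P₂ * (P₂*Z*P₁) * P₁ = P₂*Z*P₁ := by
    intro Z; rw [show P₂ * (P₂*Z*P₁) * P₁ = (P₂*P₂)*Z*(P₁*P₁) by simp [mul_assoc], hP₁, hP₂i]
  have c22 : ∀ Z : A, P₂ * (P₂*Z*P₂) * P₂ = P₂*Z*P₂ := by
    intro Z; rw [show P₂ * (P₂*Z*P₂) * P₂ = (P₂*P₂)*Z*(P₂*P₂) by simp [mul_assoc], hP₂i]
  -- derivation predicate and additivity
  set D : A → A → Prop := fun x y => φ (x * y) = φ x * α y + α x * φ y with hD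
  have Dl : ∀ x₁ x₂ y, D x₁ y → D x₂ y → D (x₁ + x₂) y := by
    intro x₁ x₂ y h₁ h₂
    simp only [hD] at *
    rw [add_mul, map_add, h₁, h₂, map_add, map_add, add_mul, add_mul]
    abel
  have Dr : ∀ x y₁ y₂, D x y₁ → D x y₂ → D x (y₁ + y₂) := by
    intro x y₁ y₂ h₁ h₂
    simp only [hD] at *
    rw [mul_add, map_add, h₁, h₂, map_add, map_add, mul_add, mul_add]
    abel
  -- all 16 corner cases
  have key : ∀ Z W : A, D (P₁*Z*P₁) W ∧ D (P₁*Z*P₂) W ∧ D (P₂*Z*P₁) W ∧ D (P₂*Z*P₂) W →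
      True := fun _ _ _ => trivial
  have case : ∀ x y : A,
      ((P₁*x*P₁ = x ∨ P₁*x*P₂ = x) ∨ (P₂*x*P₁ = x ∨ P₂*x*P₂ = x)) →
      ((P₁*y*P₁ = y ∨ P₁*y*P₂ = y) ∨ (P₂*y*P₁ = y ∨ P₂*y*P₂ = y)) → D x y := by
    intro x y hx hy
    rcases hx with (hx | hx) | (hx | hx) <;> rcases hy with (hy | hy) | (hy | hy)
    · exact hm1 x y hx hy
    · exact hm2 x y hx hy
    · exact aux_mixed α φ P₁ P₁ P₂ P₁ x y hx hy h12 (Or.inl (hc11 x hx)) (Or.inl (hc21 y hy))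
    · exact aux_mixed α φ P₁ P₁ P₂ P₂ x y hx hy h12 (Or.inl (hc11 x hx)) (Or.inr (hc22 y hy))
    · exact aux_mixed α φ P₁ P₂ P₁ P₁ x y hx hy h21 (Or.inl (hc12 x hx)) (Or.inl (hc11 y hy))
    · exact aux_mixed α φ P₁ P₂ P₁ P₂ x y hx hy h21 (Or.inl (hc12 x hx)) (Or.inl (hc12 y hy))
    · exact hm3 x y hx hy
    · exact hm4 x y hx hy
    · exact hm7 x y hx hy
    · exact hm8 x y hx hy
    · exact aux_mixed α φ P₂ P₁ P₂ P₁ x y hx hy h12 (Or.inl (hc21 x hx)) (Or.inl (hc21 y hy))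
    · exact aux_mixed α φ P₂ P₁ P₂ P₂ x y hx hy h12 (Or.inl (hc21 x hx)) (Or.inr (hc22 y hy))
    · exact aux_mixed α φ P₂ P₂ P₁ P₁ x y hx hy h21 (Or.inr (hc22 x hx)) (Or.inl (hc11 y hy))
    · exact aux_mixed α φ P₂ P₂ P₁ P₂ x y hx hy h21 (Or.inr (hc22 x hx)) (Or.inl (hc12 y hy))
    · exact hm5 x y hx hy
    · exact hm6 x y hx hy
  have hXY : D X Y := by
    rw [hdec X, hdec Y]
    apply Dl; apply Dl; apply Dl
    all_goals (
      apply Dr; apply Dr; apply Dr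
      all_goals (
        apply case <;>
        first
          | exact Or.inl (Or.inl (c11 _))
          | exact Or.inl (Or.inr (c12 _))
          | exact Or.inr (Or.inl (c21 _))
          | exact Or.inr (Or.inr (c22 _))))
  exact hXY
end

section
/- Let A be a prime algebra, α an automorphism, P₁ a nontrivial idempotent with P₂ = 1 − P₁, and φ: A → A linear with φ(B₁₁) = φ(P₁)α(B₁₁) + α(P₁)φ(B₁₁) for all B₁₁ ∈ P₁AP₁, and α(A₁₂)·φ(P₁)·α(A₁₂) = 0 for all A₁₂ ∈ P₁AP₂. Then α(P₂)·φ(P₁)·α(P₁) = 0. -/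
/-- In a prime algebra, α(P₂)·φ(P₁)·α(P₁) = 0. -/
theorem stmt_15 {F A : Type*} [Field F] [Ring A] [Algebra F A]
    (hprime : ∀ x y : A, (∀ a : A, x * a * y = 0) → x = 0 ∨ y = 0)
    (α : A ≃ₐ[F] A) (P₁ P₂ : A) (hP₁ : P₁ * P₁ = P₁) (hP₂ : P₂ = 1 - P₁)
    (hnt0 : P₁ ≠ 0) (hnt1 : P₁ ≠ 1)
    (φ : A →ₗ[F] A)
    (h19 : ∀ B₁₁ : A, P₁ * B₁₁ * P₁ = B₁₁ →
      φ B₁₁ = φ P₁ * α B₁₁ + α P₁ * φ B₁₁)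
    (h2 : ∀ A₁₂ : A, P₁ * A₁₂ * P₂ = A₁₂ → α A₁₂ * φ P₁ * α A₁₂ = 0) :
    α P₂ * φ P₁ * α P₁ = 0 := by
  set p := α P₁ with hp
  set q := α P₂ with hq
  set b := φ P₁ with hb
  -- P₂ is idempotent
  have hP₂sq : P₂ * P₂ = P₂ := by
    rw [hP₂]
    have : (1 - P₁) * (1 - P₁) = 1 - P₁ - P₁ + P₁ * P₁ := by noncomm_ring
    rw [this, hP₁]; abel
  -- key: every element of the form p*x*q satisfies (pxq) b (pxq) = 0
  have key : ∀ x : A, (p * x * q) * b * (p * x * q) = 0 := by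
    intro x
    have hmem : P₁ * (P₁ * α.symm x * P₂) * P₂ = P₁ * α.symm x * P₂ := by
      calc P₁ * (P₁ * α.symm x * P₂) * P₂
          = (P₁ * P₁) * α.symm x * (P₂ * P₂) := by noncomm_ring
        _ = P₁ * α.symm x * P₂ := by rw [hP₁, hP₂sq]
    have h := h2 _ hmem
    have himg : α (P₁ * α.symm x * P₂) = p * x * q := by
      simp [map_mul, hp, hq]
    rwa [himg] at h
  -- skew symmetry
  have skew : ∀ x y : A, (p * x * q) * b * (p * y * q) + (p * y * q) * b * (p * x * q) = 0 := by
    intro x y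
    have h := key (x + y)
    have hexp : (p * (x + y) * q) * b * (p * (x + y) * q)
        = (p * x * q) * b * (p * x * q)
          + ((p * x * q) * b * (p * y * q) + (p * y * q) * b * (p * x * q))
          + (p * y * q) * b * (p * y * q) := by noncomm_ring
    rw [hexp, key x, key y] at h
    simpa using h
  -- sandwich lemma
  have sand : ∀ x y : A, (p * x * q) * b * (p * y * q) * b * (p * x * q) = 0 := by
    intro x y
    have hst : (p * x * q) * b * (p * y * q) = p * (x * q * b * p * y) * q := by
      noncomm_ring
    have h1 := skew (x * q * b * p * y) x
    rw [← hst] at h1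
    have h2' : (p * x * q) * b * ((p * x * q) * b * (p * y * q))
        = ((p * x * q) * b * (p * x * q)) * b * (p * y * q) := by noncomm_ring
    have h3 : (p * x * q) * b * ((p * x * q) * b * (p * y * q)) = 0 := by
      rw [h2', key x, zero_mul, zero_mul]
    have h4 : ((p * x * q) * b * (p * y * q)) * b * (p * x * q) = 0 := by
      have := h1
      rw [h3, add_zero] at this
      exact this
    calc (p * x * q) * b * (p * y * q) * b * (p * x * q)
        = ((p * x * q) * b * (p * y * q)) * b * (p * x * q) := by noncomm_ring
      _ = 0 := h4
  -- q b (p x q) b p = 0 for all x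
  have L3 : ∀ x : A, q * b * (p * x * q) * b * p = 0 := by
    intro x
    have hz : ∀ a : A, (q * b * (p * x * q) * b * p) * a * (q * b * (p * x * q) * b * p) = 0 := by
      intro a
      have heq : (q * b * (p * x * q) * b * p) * a * (q * b * (p * x * q) * b * p)
          = q * b * ((p * x * q) * b * (p * a * q) * b * (p * x * q)) * b * p := by
        noncomm_ring
      rw [heq, sand x a]
      simp
    rcases hprime _ _ hz with h | h <;> exact h
  -- conclude
  have hz : ∀ a : A, (q * b * p) * a * (q * b * p) = 0 := by
    intro a
    have heq : (q * b * p) * a * (q * b * p) = (q * b * (p * a * q) * b * p) := by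
      noncomm_ring
    rw [heq, L3 a]
  rcases hprime _ _ hz with h | h <;> exact h
end

section
/- Let A be a unital algebra, α an automorphism, P₁ an idempotent, P₂ = 1 − P₁, and φ: A → A linear satisfying φ(A₁₂B₂₁) = φ(A₁₂)α(B₂₁) + α(A₁₂)φ(B₂₁) for all A₁₂ ∈ P₁AP₂, B₂₁ ∈ P₂AP₁, and the (1,1)- and (1,2)-corner product rules φ(A₁₁B₁₁) = φ(A₁₁)α(B₁₁) + α(A₁₁)φ(B₁₁) and φ(A₁₁B₁₂) = φ(A₁₁)α(B₁₂) + α(A₁₁)φ(B₁₂). Then for all A₁₂ ∈ P₁AP₂, A₂₁ ∈ P₂AP₁, B₁₁ ∈ P₁AP₁: α(A₁₂)·[φ(A₂₁B₁₁) − φ(A₂₁)α(B₁₁) − α(A₂₁)φ(B₁₁)] = 0. -/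
/-- The associativity computation yielding the (2,1)×(1,1) product rule up to
left multiplication by α(A₁₂). -/
theorem stmt_19 {F A : Type*} [Field F] [Ring A] [Algebra F A]
    (α : A ≃ₐ[F] A) (P₁ P₂ : A) (hP₁ : P₁ * P₁ = P₁) (hP₂ : P₂ = 1 - P₁)
    (φ : A →ₗ[F] A)
    (hm3 : ∀ x y : A, P₁ * x * P₂ = x → P₂ * y * P₁ = y →
      φ (x * y) = φ x * α y + α x * φ y)
    (hm1 : ∀ x y : A, P₁ * x * P₁ = x → P₁ * y * P₁ = y →
      φ (x * y) = φ x * α y + α x * φ y)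
    (hm2 : ∀ x y : A, P₁ * x * P₁ = x → P₁ * y * P₂ = y →
      φ (x * y) = φ x * α y + α x * φ y) :
    ∀ A₁₂ A₂₁ B₁₁ : A, P₁ * A₁₂ * P₂ = A₁₂ → P₂ * A₂₁ * P₁ = A₂₁ →
      P₁ * B₁₁ * P₁ = B₁₁ →
      α A₁₂ * (φ (A₂₁ * B₁₁) - φ A₂₁ * α B₁₁ - α A₂₁ * φ B₁₁) = 0 := by
  intro A₁₂ A₂₁ B₁₁ h12 h21 h11
  have hP₂₂ : P₂ * P₂ = P₂ := by
    subst hP₂; simp [mul_sub, sub_mul, hP₁]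
  have e1 : P₂ * A₂₁ = A₂₁ := by
    conv_lhs => rw [← h21]
    rw [← mul_assoc, ← mul_assoc, hP₂₂, h21]
  have e2 : B₁₁ * P₁ = B₁₁ := by
    conv_lhs => rw [← h11]
    rw [mul_assoc, mul_assoc, hP₁, ← mul_assoc, h11]
  have e3 : A₂₁ * P₁ = A₂₁ := by
    conv_lhs => rw [← h21]
    rw [mul_assoc, mul_assoc, hP₁, ← mul_assoc, h21]
  have e4 : P₁ * B₁₁ = B₁₁ := by
    conv_lhs => rw [← h11]
    rw [← mul_assoc, ← mul_assoc, hP₁, h11]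
  have hab : P₂ * (A₂₁ * B₁₁) * P₁ = A₂₁ * B₁₁ := by
    rw [← mul_assoc, e1, mul_assoc, e2]
  have hcd : P₁ * (A₁₂ * A₂₁) * P₁ = A₁₂ * A₂₁ := by
    have e5 : P₁ * A₁₂ = A₁₂ := by
      conv_lhs => rw [← h12]
      rw [← mul_assoc, ← mul_assoc, hP₁, h12]
    rw [← mul_assoc, e5, mul_assoc, e3]
  have H1 := hm1 (A₁₂ * A₂₁) B₁₁ hcd h11
  have H2 := hm3 A₁₂ (A₂₁ * B₁₁) h12 hab
  have H3 := hm3 A₁₂ A₂₁ h12 h21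
  rw [mul_assoc, H2, H3, map_mul α, map_mul α] at H1
  have key : α A₁₂ * φ (A₂₁ * B₁₁) =
      α A₁₂ * (φ A₂₁ * α B₁₁) + α A₁₂ * (α A₂₁ * φ B₁₁) := by
    refine add_left_cancel (a := φ A₁₂ * (α A₂₁ * α B₁₁)) ?_
    rw [H1]
    noncomm_ring
  rw [mul_sub, mul_sub, key]
  noncomm_ring
end
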